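/- Fix a real number θ ≠ 0. The Moyal star-product is tracial: for all complex-valued Schwartz functions f₁, f₂ on ℝ^{2d}, ∫_{ℝ^{2d}} (f₁ ⋆ f₂)(z) dz = ∫_{ℝ^{2d}} f₁(z) f₂(z) dz. -/

import Mathlib

open MeasureTheory Complex Filter
open scoped Real ENNReal

noncomputable section

/-- `ℝ^d` as a measure space. -/
abbrev Rd (d : ℕ) := Fin d → ℝ

/-- `ℝ^d × ℝ^d`, the phase space `ℝ^{2d}`. -/
abbrev Phase (d : ℕ) := Rd d × Rd d

/-- Euclidean inner product `⟨x,w⟩` on `ℝ^d`. -/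
def dot {d : ℕ} (x w : Rd d) : ℝ := ∑ i, x i * w i

/-- Directional derivative along the vector `v`. -/
def pderiv1 {E F : Type*} [NormedAddCommGroup E] [NormedSpace ℝ E]
    [NormedAddCommGroup F] [NormedSpace ℝ F] (v : E) (f : E → F) : E → F :=
  fun z => fderiv ℝ f z v

/-- Laplacian in all `2d` variables `(x,w)` on `ℝ^d × ℝ^d`. -/
def laplacian {d : ℕ} {F : Type*} [NormedAddCommGroup F] [NormedSpace ℝ F]
    (f : Phase d → F) : Phase d → F := fun z =>
  (∑ i : Fin d, pderiv1 ((Pi.single i 1 : Rd d), (0 : Rd d))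
      (pderiv1 ((Pi.single i 1 : Rd d), (0 : Rd d)) f) z)
  + ∑ i : Fin d, pderiv1 ((0 : Rd d), (Pi.single i 1 : Rd d))
      (pderiv1 ((0 : Rd d), (Pi.single i 1 : Rd d)) f) z

/-- The operator `O`: `(O·f)(x,w) = (1−Δ)((1+|x|²+|w|²)⁻¹ f(x,w))`. -/
def OpO {d : ℕ} {F : Type*} [NormedAddCommGroup F] [NormedSpace ℝ F]
    (f : Phase d → F) : Phase d → F := fun z =>
  (fun y : Phase d => (1 + dot y.1 y.1 + dot y.2 y.2)⁻¹ • f y) z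
    - laplacian (fun y : Phase d => (1 + dot y.1 y.1 + dot y.2 y.2)⁻¹ • f y) z

/-- The oscillating phase `e^{i⟨x,w⟩}`. -/
def osc {d : ℕ} (z : Phase d) : ℂ := Complex.exp (Complex.I * (dot z.1 z.2 : ℝ))

/-- The Moyal star-product on `ℝ^{2d}`:
`(f⋆g)(x,w) = (πθ)^{-2d} ∫ f(x₁,w₁) g(x₂,w₂)
  exp((2i/θ)(⟨x₂−x,w₁⟩+⟨x−x₁,w₂⟩+⟨x₁−x₂,w⟩)) dx₁dw₁dx₂dw₂`. -/
def moyal {d : ℕ} (θ : ℝ) (f g : Phase d → ℂ) : Phase d → ℂ := fun z =>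
  ((((Real.pi * θ) ^ (2 * d))⁻¹ : ℝ) : ℂ) *
    ∫ p : Phase d × Phase d,
      f p.1 * g p.2 * Complex.exp ((2 * Complex.I / (θ : ℂ)) *
        ((dot (p.2.1 - z.1) p.1.2 + dot (z.1 - p.1.1) p.2.2
            + dot (p.1.1 - p.2.1) z.2 : ℝ) : ℂ))

/-!
Substituting `p₁ = z + πθ J η`, with `J (x, w) = (w, -x)`, in the Moyal integral (its Jacobian
`(πθ)^{2d}` cancels the normalisation) and integrating out `p₂` gives
`(f ⋆ g)(z) = ∫ f (z + πθ J η) ĝ(η) e^{2πi⟨z, η⟩} dη`, where `ĝ` is the Fourier transform of `g`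
for the pairing `⟨(x, w), (ξ, ω)⟩ = ⟨x, ξ⟩ + ⟨w, ω⟩` on phase space. This kernel is absolutely
integrable in `(z, η)`, so Fubini applies; since `⟨J η, η⟩ = 0`, the `z`-integral of the kernel is
`f̂(-η) ĝ(η)`, and `∫ f̂(-η) ĝ(η) dη = ∫ f g` by Fourier inversion.
-/

open scoped FourierTransform RealInnerProductSpace SchwartzMap

namespace Moyal

variable {d : ℕ}

theorem dot_eq_dotProduct (x w : Rd d) : dot x w = x ⬝ᵥ w := rfl

def pairing (a b : Phase d) : ℝ := dot a.1 b.1 + dot a.2 b.2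

theorem continuous_pairing : Continuous fun p : Phase d × Phase d => pairing p.1 p.2 := by
  simp only [pairing, dot_eq_dotProduct]
  fun_prop

theorem pairing_neg_right (a b : Phase d) : pairing a (-b) = -pairing a b := by
  simp only [pairing, Prod.fst_neg, Prod.snd_neg, dot_eq_dotProduct, dotProduct_neg]
  ring

def rot (d : ℕ) : Phase d ≃L[ℝ] Phase d :=
  (ContinuousLinearEquiv.prodComm ℝ (Rd d) (Rd d)).trans
    ((ContinuousLinearEquiv.refl ℝ (Rd d)).prodCongr (ContinuousLinearEquiv.neg ℝ))

@[simp]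
theorem rot_apply (η : Phase d) : rot d η = (η.2, -η.1) := rfl

theorem pairing_sub_smul_rot (z η : Phase d) (c : ℝ) :
    pairing (z - c • rot d η) η = pairing z η := by
  simp only [pairing, dot_eq_dotProduct, Prod.fst_sub, Prod.snd_sub, Prod.smul_fst,
    Prod.smul_snd, sub_dotProduct, smul_dotProduct, rot_apply, neg_dotProduct, smul_eq_mul,
    dotProduct_comm η.2]
  ring

theorem measurePreserving_rot : MeasurePreserving (rot d) volume volume :=
  ((MeasurePreserving.id volume).prod (Measure.measurePreserving_neg volume)).comp
    Measure.measurePreserving_swap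

instance : (volume : Measure (Phase d)).IsAddHaarMeasure :=
  Measure.prod.instIsAddHaarMeasure _ _

theorem integral_eq_smul_integral_add_smul_rot {E : Type*} [NormedAddCommGroup E]
    [NormedSpace ℝ E] (F : Phase d → E) (z : Phase d) {c : ℝ} (hc : c ≠ 0) :
    ∫ p, F p = c ^ (2 * d) • ∫ η, F (z + c • rot d η) := by
  have hdim : Module.finrank ℝ (Phase d) = 2 * d := by
    rw [Module.finrank_prod, Module.finrank_fin_fun, two_mul]
  have hscale : ∫ v, F (z + c • v) = (c ^ (2 * d))⁻¹ • ∫ v, F (z + v) := by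
    rw [Measure.integral_comp_smul volume (fun v => F (z + v)) c, hdim, pow_mul,
      abs_of_nonneg (by positivity)]
  rw [measurePreserving_rot.integral_comp (rot d).toHomeomorph.measurableEmbedding
    fun v => F (z + c • v), hscale, smul_inv_smul₀ (pow_ne_zero _ hc), integral_add_left_eq_self]

def euclideanEquiv (d : ℕ) : EuclideanSpace ℝ (Fin d ⊕ Fin d) ≃L[ℝ] Phase d :=
  EuclideanSpace.equiv (Fin d ⊕ Fin d) ℝ |>.trans
    (ContinuousLinearEquiv.sumPiEquivProdPi ℝ (Fin d) (Fin d) fun _ => ℝ)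

theorem measurePreserving_euclideanEquiv :
    MeasurePreserving (euclideanEquiv d) volume volume :=
  (volume_measurePreserving_sumPiEquivProdPi fun _ : Fin d ⊕ Fin d => ℝ).comp
    (EuclideanSpace.volume_preserving_symm_measurableEquiv_toLp (Fin d ⊕ Fin d))

theorem integral_comp_euclideanEquiv {E : Type*} [NormedAddCommGroup E] [NormedSpace ℝ E]
    (F : Phase d → E) : ∫ a, F (euclideanEquiv d a) = ∫ p, F p :=
  measurePreserving_euclideanEquiv.integral_comp
    (euclideanEquiv d).toHomeomorph.measurableEmbedding F

theorem pairing_euclideanEquiv (a b : EuclideanSpace ℝ (Fin d ⊕ Fin d)) :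
    pairing (euclideanEquiv d a) (euclideanEquiv d b) = ⟪a, b⟫ := by
  simp only [pairing, dot, euclideanEquiv, ContinuousLinearEquiv.trans_apply, PiLp.inner_apply,
    RCLike.inner_apply, Real.ringHom_apply, mul_comm, Fintype.sum_sum_type]
  rfl

theorem _root_.SchwartzMap.integral_fourier_neg_mul_fourier {V : Type*} [NormedAddCommGroup V]
    [InnerProductSpace ℝ V] [FiniteDimensional ℝ V] [MeasurableSpace V] [BorelSpace V]
    (F G : 𝓢(V, ℂ)) : ∫ ξ, 𝓕 F (-ξ) * 𝓕 G ξ = ∫ x, F x * G x := by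
  have hneg (ξ : V) : 𝓕 F (-ξ) = 𝓕⁻ F ξ := by
    rw [SchwartzMap.fourierInv_coe, Real.fourierInv_eq_fourier_neg, SchwartzMap.fourier_coe]
  simp_rw [hneg, SchwartzMap.integral_fourierInv_mul_eq, FourierTransform.fourierInv_fourier_eq]

def phaseFourier (g : 𝓢(Phase d, ℂ)) : 𝓢(Phase d, ℂ) :=
  SchwartzMap.compCLMOfContinuousLinearEquiv ℂ (euclideanEquiv d).symm
    (𝓕 (SchwartzMap.compCLMOfContinuousLinearEquiv ℂ (euclideanEquiv d) g))

theorem phaseFourier_apply (g : 𝓢(Phase d, ℂ)) (ξ : Phase d) :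
    phaseFourier g ξ = ∫ v, Complex.exp (↑(-2 * π * pairing v ξ) * I) * g v := by
  have hinner (a : EuclideanSpace ℝ (Fin d ⊕ Fin d)) :
      ⟪a, (euclideanEquiv d).symm ξ⟫ = pairing (euclideanEquiv d a) ξ := by
    rw [← pairing_euclideanEquiv, ContinuousLinearEquiv.apply_symm_apply]
  rw [← integral_comp_euclideanEquiv]
  simp only [phaseFourier, SchwartzMap.compCLMOfContinuousLinearEquiv_apply,
    SchwartzMap.fourier_coe, Function.comp_apply, Real.fourier_eq', smul_eq_mul, hinner]

theorem integral_phaseFourier_neg_mul (f g : 𝓢(Phase d, ℂ)) :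
    ∫ η, phaseFourier f (-η) * phaseFourier g η = ∫ p, f p * g p := by
  rw [← integral_comp_euclideanEquiv, ← integral_comp_euclideanEquiv]
  convert SchwartzMap.integral_fourier_neg_mul_fourier
    (SchwartzMap.compCLMOfContinuousLinearEquiv ℂ (euclideanEquiv d) f)
    (SchwartzMap.compCLMOfContinuousLinearEquiv ℂ (euclideanEquiv d) g) using 3 <;>
    simp [phaseFourier, SchwartzMap.compCLMOfContinuousLinearEquiv_apply]

theorem integrable_mul_exp_ofReal_mul_I {α : Type*} [MeasurableSpace α] {μ : Measure α}
    {F : α → ℂ} (hF : Integrable F μ) {φ : α → ℝ} (hφ : Measurable φ) :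
    Integrable (fun a => F a * Complex.exp (φ a * I)) μ :=
  hF.mul_bdd (by fun_prop) (c := 1) <| .of_forall fun a => by
    rw [Complex.norm_exp_ofReal_mul_I]

def moyalPhase (z p₁ p₂ : Phase d) : ℝ :=
  dot (p₂.1 - z.1) p₁.2 + dot (z.1 - p₁.1) p₂.2 + dot (p₁.1 - p₂.1) z.2

theorem continuous_moyalPhase (z : Phase d) :
    Continuous fun p : Phase d × Phase d => moyalPhase z p.1 p.2 := by
  simp only [moyalPhase, dot_eq_dotProduct]
  fun_prop

theorem moyal_apply_eq (θ : ℝ) (f g : Phase d → ℂ) (z : Phase d) :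
    moyal θ f g z = ((((π * θ) ^ (2 * d))⁻¹ : ℝ) : ℂ) *
      ∫ p : Phase d × Phase d,
        f p.1 * g p.2 * Complex.exp (↑(2 / θ * moyalPhase z p.1 p.2) * I) := by
  simp only [moyal, moyalPhase]
  congr 2 with p
  push_cast
  ring_nf

theorem moyalPhase_add_smul_rot (z p η : Phase d) (c : ℝ) :
    moyalPhase z (z + c • rot d η) p = c * (pairing z η - pairing p η) := by
  simp only [moyalPhase, pairing, dot, rot_apply, Prod.fst_add, Prod.snd_add, Prod.smul_fst,
    Prod.smul_snd, Pi.add_apply, Pi.sub_apply, Pi.smul_apply, Pi.neg_apply, smul_eq_mul,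
    Finset.mul_sum, ← Finset.sum_add_distrib, ← Finset.sum_sub_distrib]
  exact Finset.sum_congr rfl fun i _ => by ring

def moyalKernel (θ : ℝ) (f g : 𝓢(Phase d, ℂ)) (z η : Phase d) : ℂ :=
  f (z + (π * θ) • rot d η) * phaseFourier g η * Complex.exp (↑(2 * π * pairing z η) * I)

theorem moyal_eq_integral_moyalKernel {θ : ℝ} (hθ : θ ≠ 0) (f g : 𝓢(Phase d, ℂ))
    (z : Phase d) : moyal θ f g z = ∫ η, moyalKernel θ f g z η := by
  have hπθ : π * θ ≠ 0 := mul_ne_zero Real.pi_ne_zero hθ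
  have hint : Integrable (fun p : Phase d × Phase d =>
      f p.1 * g p.2 * Complex.exp (↑(2 / θ * moyalPhase z p.1 p.2) * I)) (volume.prod volume) :=
    integrable_mul_exp_ofReal_mul_I (f.integrable.mul_prod g.integrable)
      (measurable_const.mul (continuous_moyalPhase z).measurable)
  have hθc : (θ : ℂ) ≠ 0 := Complex.ofReal_ne_zero.mpr hθ
  have hslice (η : Phase d) :
      ∫ p₂, f (z + (π * θ) • rot d η) * g p₂ *
        Complex.exp (↑(2 / θ * moyalPhase z (z + (π * θ) • rot d η) p₂) * I)
      = moyalKernel θ f g z η := by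
    have hexp (p₂ : Phase d) :
        Complex.exp (↑(2 / θ * moyalPhase z (z + (π * θ) • rot d η) p₂) * I)
        = Complex.exp (↑(-2 * π * pairing p₂ η) * I)
          * Complex.exp (↑(2 * π * pairing z η) * I) := by
      rw [← Complex.exp_add, moyalPhase_add_smul_rot]
      congr 1
      push_cast
      field_simp
      ring
    simp_rw [hexp, moyalKernel, phaseFourier_apply, ← integral_const_mul, ← integral_mul_const]
    congr 1 with p₂
    ring
  rw [moyal_apply_eq, Measure.volume_eq_prod, integral_prod _ hint,
    integral_eq_smul_integral_add_smul_rot _ z hπθ, Complex.real_smul, ← mul_assoc,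
    ← Complex.ofReal_mul, inv_mul_cancel₀ (pow_ne_zero _ hπθ), Complex.ofReal_one, one_mul]
  simp_rw [hslice]

theorem integrable_moyalKernel (θ : ℝ) (f g : 𝓢(Phase d, ℂ)) :
    Integrable (fun q : Phase d × Phase d => moyalKernel θ f g q.1 q.2) (volume.prod volume) := by
  have hshear : MeasurePreserving (fun q : Phase d × Phase d => (q.1, q.2 + (π * θ) • rot d q.1))
      (volume.prod volume) (volume.prod volume) :=
    (MeasurePreserving.id volume).skew_product (g := fun η z => z + (π * θ) • rot d η)
      (by fun_prop) (.of_forall fun η => map_add_right_eq_self volume _)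
  have hamp : Integrable (fun q : Phase d × Phase d =>
      f (q.1 + (π * θ) • rot d q.2) * phaseFourier g q.2) (volume.prod volume) :=
    (hshear.integrable_comp_of_integrable
      (f.integrable.mul_prod (phaseFourier g).integrable).swap).swap
  exact integrable_mul_exp_ofReal_mul_I hamp
    (measurable_const.mul continuous_pairing.measurable)

theorem integral_moyalKernel_left (θ : ℝ) (f g : 𝓢(Phase d, ℂ)) (η : Phase d) :
    ∫ z, moyalKernel θ f g z η = phaseFourier f (-η) * phaseFourier g η := by
  rw [← integral_sub_right_eq_self _ ((π * θ) • rot d η), phaseFourier_apply,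
    ← integral_mul_const]
  congr 1 with z
  simp only [moyalKernel, pairing_sub_smul_rot, sub_add_cancel, pairing_neg_right, mul_neg,
    neg_mul, neg_neg]
  ring

end Moyal

/-- For `θ ≠ 0` the Moyal star-product is tracial on Schwartz functions:
`∫ (f₁ ⋆ f₂) = ∫ f₁ f₂`. -/
theorem moyal_tracial (d : ℕ) (θ : ℝ) (hθ : θ ≠ 0) (f₁ f₂ : SchwartzMap (Phase d) ℂ) :
    Integrable (moyal θ ⇑f₁ ⇑f₂) volume ∧
    ∫ z : Phase d, moyal θ ⇑f₁ ⇑f₂ z = ∫ z : Phase d, f₁ z * f₂ z := by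
  have hmoyal : moyal θ ⇑f₁ ⇑f₂ = fun z => ∫ η, Moyal.moyalKernel θ f₁ f₂ z η :=
    funext (Moyal.moyal_eq_integral_moyalKernel hθ f₁ f₂)
  have hkernel := Moyal.integrable_moyalKernel θ f₁ f₂
  refine ⟨hmoyal ▸ hkernel.integral_prod_left, ?_⟩
  rw [hmoyal, integral_integral_swap hkernel]
  simp_rw [Moyal.integral_moyalKernel_left]
  exact Moyal.integral_phaseFourier_neg_mul f₁ f₂
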